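/- arXiv:2105.15196 — 5 statements merged into one kernel-verified Lean document; each statement's English description precedes it below -/
import Mathlib

section
/- Let f : [0,∞) → ℝ be C² with only finitely many zeros and f(0) ≥ 0. Then f admits a representation f(y) = f⁺(y) + y·f⁻(y) where f⁺, f⁻ are C¹ on [0,∞), f⁺(y) ≥ 0 for all y ≥ 0, and f⁻(y) ≤ 0 for all y ≥ 0. -/
/-!
Take `f⁻ = -(K + 1 + f²)` and `f⁺ = f - y f⁻`, where `K` is a Lipschitz constant of `f` on
`[0, 1]`. On `[0, 1]` we have `f y ≥ f 0 - K y ≥ -K y`, which the term `y K` of `f⁺` absorbs;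
for `y ≥ 1` the term `y (1 + f²) ≥ 1 + f² > -f` does.
-/

open Set

theorem zero_le_add_mul_add_one_add_sq {x y K : ℝ} (hK : 0 ≤ K) (hy : 0 ≤ y)
    (hx : y ≤ 1 → -(K * y) ≤ x) : 0 ≤ x + y * (K + 1 + x ^ 2) := by
  rcases le_or_gt y 1 with hy1 | hy1
  · nlinarith [hx hy1, mul_nonneg hy (sq_nonneg x)]
  · nlinarith [sq_nonneg (x + 1 / 2), mul_nonneg (sub_nonneg.2 hy1.le) (add_nonneg hK
      (add_nonneg zero_le_one (sq_nonneg x)))]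

theorem ContDiffOn.exists_le_add_mul_sub_of_Icc {f : ℝ → ℝ} {a b : ℝ}
    (hf : ContDiffOn ℝ 1 f (Icc a b)) (hab : a ≤ b) :
    ∃ K : ℝ, 0 ≤ K ∧ ∀ y ∈ Icc a b, f a ≤ f y + K * (y - a) := by
  obtain ⟨K, hK⟩ := hf.exists_lipschitzOnWith one_ne_zero (convex_Icc a b) isCompact_Icc
  refine ⟨K, K.coe_nonneg, fun y hy => ?_⟩
  have := hK.le_add_mul (left_mem_Icc.2 hab) hy
  rwa [Real.dist_eq, abs_sub_comm, abs_of_nonneg (sub_nonneg.2 hy.1)] at this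

theorem representation_theorem_general (f : ℝ → ℝ)
    (hf : ContDiffOn ℝ 2 f (Ici 0))
    (hf0 : 0 ≤ f 0) :
    ∃ fp fm : ℝ → ℝ,
      ContDiffOn ℝ 1 fp (Ici 0) ∧ ContDiffOn ℝ 1 fm (Ici 0) ∧
      (∀ y ≥ (0:ℝ), f y = fp y + y * fm y) ∧
      (∀ y ≥ (0:ℝ), 0 ≤ fp y) ∧
      (∀ y ≥ (0:ℝ), fm y ≤ 0) := by
  have hf1 : ContDiffOn ℝ 1 f (Ici 0) := hf.of_le (by norm_num)
  obtain ⟨K, hK, hlip⟩ :=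
    (hf1.mono Icc_subset_Ici_self).exists_le_add_mul_sub_of_Icc zero_le_one
  refine ⟨fun y => f y + y * (K + 1 + f y ^ 2), fun y => -(K + 1 + f y ^ 2),
    by fun_prop, by fun_prop, fun y _ => by ring, fun y hy => ?_,
    fun y _ => by nlinarith [sq_nonneg (f y)]⟩
  refine zero_le_add_mul_add_one_add_sq hK hy fun hy1 => ?_
  linarith [hlip y ⟨hy, hy1⟩]

theorem representation_theorem (f : ℝ → ℝ)
    (hf : ContDiffOn ℝ 2 f (Ici 0))
    (hzeros : {y : ℝ | 0 ≤ y ∧ f y = 0}.Finite)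
    (hf0 : 0 ≤ f 0) :
    ∃ fp fm : ℝ → ℝ,
      ContDiffOn ℝ 1 fp (Ici 0) ∧ ContDiffOn ℝ 1 fm (Ici 0) ∧
      (∀ y ≥ (0:ℝ), f y = fp y + y * fm y) ∧
      (∀ y ≥ (0:ℝ), 0 ≤ fp y) ∧
      (∀ y ≥ (0:ℝ), fm y ≤ 0) :=
  representation_theorem_general f hf hf0
end

section
/- Consider the NSFD scheme y_{n+1} = (y_n + φ f⁺(y_n) + φ α y_n f⁻(y_n)) / (1 − φ β f⁻(y_n)), where φ = φ(h, y_n) ≥ 0, f⁺(y) ≥ 0 and f⁻(y) ≤ 0 for all y ≥ 0, α ≤ 0, β ≥ 0 and α + β = 1. If y_0 ≥ 0 then y_n ≥ 0 for all n ≥ 1, i.e., the scheme is unconditionally positivity-preserving. -/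
theorem nsfd_positivity (fp fm : ℝ → ℝ) (φ : ℝ → ℝ → ℝ) (α β h : ℝ)
    (hφ : ∀ s ≥ (0:ℝ), ∀ y ≥ (0:ℝ), 0 ≤ φ s y)
    (hfp : ∀ y ≥ (0:ℝ), 0 ≤ fp y)
    (hfm : ∀ y ≥ (0:ℝ), fm y ≤ 0)
    (hα : α ≤ 0) (hβ : 0 ≤ β) (hαβ : α + β = 1) (hh : 0 < h)
    (y : ℕ → ℝ)
    (hrec : ∀ n : ℕ,
      y (n + 1) =
        (y n + φ h (y n) * fp (y n) + φ h (y n) * α * y n * fm (y n)) /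
          (1 - φ h (y n) * β * fm (y n)))
    (hy0 : 0 ≤ y 0) :
    ∀ n : ℕ, 0 ≤ y n := by
  intro n
  induction n with
  | zero => exact hy0
  | succ k ih =>
    rw [hrec k]
    have hφk : 0 ≤ φ h (y k) := hφ h hh.le (y k) ih
    have hfmk : fm (y k) ≤ 0 := hfm (y k) ih
    have hnum : 0 ≤ y k + φ h (y k) * fp (y k) + φ h (y k) * α * y k * fm (y k) := by
      have h1 : 0 ≤ φ h (y k) * fp (y k) := mul_nonneg hφk (hfp (y k) ih)
      have h2 : 0 ≤ φ h (y k) * α * y k * fm (y k) := by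
        have : φ h (y k) * α * y k ≤ 0 :=
          mul_nonpos_of_nonpos_of_nonneg (mul_nonpos_of_nonneg_of_nonpos hφk hα) ih
        nlinarith [mul_nonneg (neg_nonneg.2 this) (neg_nonneg.2 hfmk)]
      positivity
    have hden : 0 < 1 - φ h (y k) * β * fm (y k) := by
      have : φ h (y k) * β * fm (y k) ≤ 0 :=
        mul_nonpos_of_nonneg_of_nonpos (mul_nonneg hφk hβ) hfmk
      linarith
    exact div_nonneg hnum hden.le
end

section
/- Let y* be a zero of f with f'(y*) > 0. Then the Jacobian J(y*) = 1 + φ(h,y*) f'(y*) / (1 − φ(h,y*) β f⁻(y*)) of the NSFD map at y* satisfies J(y*) > 1, so y* is an unstable fixed point of the scheme for every step size h > 0. -/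
theorem nsfd_unstable_equilibrium (f fm : ℝ → ℝ) (φ : ℝ → ℝ → ℝ) (β : ℝ)
    (ystar : ℝ) (hystar : 0 ≤ ystar) (hzero : f ystar = 0)
    (hderiv : 0 < deriv f ystar)
    (hfm : fm ystar ≤ 0) (hβ : 0 ≤ β)
    (hφ : ∀ h > (0:ℝ), 0 < φ h ystar) :
    ∀ h > (0:ℝ),
      1 < 1 + φ h ystar * deriv f ystar / (1 - φ h ystar * β * fm ystar) := by
  intro h hh
  have hp := hφ h hh
  have hden : 0 < 1 - φ h ystar * β * fm ystar := by nlinarith [mul_nonpos_of_nonneg_of_nonpos (mul_nonneg hp.le hβ) hfm]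
  have : 0 < φ h ystar * deriv f ystar / (1 - φ h ystar * β * fm ystar) :=
    div_pos (by positivity) hden
  linarith
end

section
/- Let y* be a zero of f with f'(y*) < 0. If φ(h, y*) < 2 / (2β f⁻(y*) − f'(y*)) for all h > 0, then the Jacobian J(y*) = 1 + φ f'(y*)/(1 − φ β f⁻(y*)) satisfies |J(y*)| < 1, so y* is a locally asymptotically stable fixed point of the NSFD scheme for every step size. -/
theorem nsfd_stable_equilibrium (f fm : ℝ → ℝ) (φ : ℝ → ℝ → ℝ) (β : ℝ)
    (ystar : ℝ) (hystar : 0 ≤ ystar) (hzero : f ystar = 0)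
    (hderiv : deriv f ystar < 0)
    (hfm : fm ystar ≤ 0) (hβ : 0 ≤ β)
    (hφpos : ∀ h > (0:ℝ), 0 < φ h ystar)
    (hφbound : ∀ h > (0:ℝ),
      φ h ystar < 2 / (2 * β * fm ystar - deriv f ystar)) :
    ∀ h > (0:ℝ),
      |1 + φ h ystar * deriv f ystar / (1 - φ h ystar * β * fm ystar)| < 1 := by
  intro h hh
  have hppos := hφpos h hh
  have hbnd := hφbound h hh
  rw [mul_assoc (φ h ystar) β (fm ystar)]
  have hmle : β * fm ystar ≤ 0 := mul_nonpos_of_nonneg_of_nonpos hβ hfm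
  set p := φ h ystar with hp
  set d := deriv f ystar with hd
  set m := β * fm ystar with hm
  have hb : p < 2 / (2 * m - d) := by
    have e : 2 * β * fm ystar = 2 * m := by rw [hm]; ring
    rw [e] at hbnd; exact hbnd
  have hDpos : 0 < 1 - p * m := by nlinarith
  have hden : 0 < 2 * m - d := by
    by_contra hc
    push_neg at hc
    have : 2 / (2 * m - d) ≤ 0 :=
      div_nonpos_of_nonneg_of_nonpos (by norm_num) hc
    linarith
  have hb' : p * (2 * m - d) < 2 := (lt_div_iff₀ hden).mp hb
  have hq : p * d / (1 - p * m) < 0 :=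
    div_neg_of_neg_of_pos (mul_neg_of_pos_of_neg hppos hderiv) hDpos
  rw [abs_lt]
  constructor
  · have h1 : -2 * (1 - p * m) < p * d := by nlinarith
    have h2 : (-2 : ℝ) < p * d / (1 - p * m) := by
      rw [lt_div_iff₀ hDpos]; linarith
    linarith
  · linarith
end

section
/- For the logistic equation y' = 2y − y² the exact scheme y_{n+1} = (y_n + 2φ y_n)/(1 + φ y_n), φ = (1 − e^{−2h})/2, preserves the equilibria and their stability for every h > 0: its fixed points are exactly 0 and 2, the Jacobian at 0 exceeds 1 (instability), and the Jacobian at 2 lies strictly in (−1, 1) (local asymptotic stability). -/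
/-!
The scheme is the Möbius map `y ↦ (1 + 2φ) y / (1 + φ y)`. Clearing the denominator, `F y = y`
becomes `φ y (2 - y) = 0`, and the quotient rule gives `F' y = (1 + 2φ) / (1 + φ y)²`, so
`F' 0 = 1 + 2φ` and `F' 2 = 1 / (1 + 2φ)`. Both lie on the required side of `1` exactly because
`φ = (1 - e^{-2h}) / 2` is positive for `h > 0`.
-/

open Real

noncomputable section

def logisticScheme (φ y : ℝ) : ℝ :=
  (y + 2 * φ * y) / (1 + φ * y)

namespace logisticScheme

variable {φ : ℝ}

theorem eq_self_iff (hφ : φ ≠ 0) (hφ₂ : 1 + 2 * φ ≠ 0) (y : ℝ) :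
    logisticScheme φ y = y ↔ y = 0 ∨ y = 2 := by
  unfold logisticScheme
  constructor
  · intro hy
    by_cases hden : 1 + φ * y = 0
    · rw [hden, div_zero] at hy
      subst hy
      norm_num at hden
    · rw [div_eq_iff hden] at hy
      have hfactor : φ * (y * (y - 2)) = 0 := by linear_combination -hy
      rcases mul_eq_zero.1 ((mul_eq_zero.1 hfactor).resolve_left hφ) with h0 | h2
      · exact Or.inl h0
      · exact Or.inr (sub_eq_zero.1 h2)
  · rintro (rfl | rfl)
    · simp
    · rw [div_eq_iff (by rwa [mul_comm])]
      ring

theorem hasDerivAt {y : ℝ} (hy : 1 + φ * y ≠ 0) :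
    HasDerivAt (logisticScheme φ) ((1 + 2 * φ) / (1 + φ * y) ^ 2) y := by
  have hnum : HasDerivAt (fun y : ℝ => y + 2 * φ * y) (1 + 2 * φ * 1) y :=
    (hasDerivAt_id y).add ((hasDerivAt_id y).const_mul _)
  have hden : HasDerivAt (fun y : ℝ => 1 + φ * y) (φ * 1) y :=
    ((hasDerivAt_id y).const_mul φ).const_add 1
  exact (hnum.div hden hy).congr_deriv (by ring)

theorem deriv_zero : deriv (logisticScheme φ) 0 = 1 + 2 * φ := by
  rw [(hasDerivAt (by norm_num)).deriv]
  norm_num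

theorem deriv_two (hφ₂ : 1 + 2 * φ ≠ 0) : deriv (logisticScheme φ) 2 = 1 / (1 + 2 * φ) := by
  rw [(hasDerivAt (by rwa [mul_comm])).deriv, mul_comm φ 2]
  field_simp

end logisticScheme

end

theorem exact_logistic_denominator_pos {h : ℝ} (hh : 0 < h) : 0 < (1 - Real.exp (-2 * h)) / 2 := by
  have : Real.exp (-2 * h) < 1 := Real.exp_lt_one_iff.2 (by linarith)
  linarith

theorem logistic_scheme_elementary_stable (h : ℝ) (hh : 0 < h)
    (φ : ℝ) (hφ : φ = (1 - Real.exp (-2 * h)) / 2)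
    (F : ℝ → ℝ) (hF : ∀ y : ℝ, F y = (y + 2 * φ * y) / (1 + φ * y)) :
    (∀ y : ℝ, F y = y ↔ y = 0 ∨ y = 2) ∧
    1 < deriv F 0 ∧
    -1 < deriv F 2 ∧ deriv F 2 < 1 := by
  obtain rfl : F = logisticScheme φ := funext hF
  have hφ₀ : 0 < φ := hφ ▸ exact_logistic_denominator_pos hh
  have hφ₂ : 0 < 1 + 2 * φ := by linarith
  rw [logisticScheme.deriv_zero, logisticScheme.deriv_two hφ₂.ne']
  refine ⟨logisticScheme.eq_self_iff hφ₀.ne' hφ₂.ne', by linarith, ?_, ?_⟩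
  · linarith [one_div_pos.2 hφ₂]
  · exact (div_lt_one hφ₂).2 (by linarith)
end
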